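/- arXiv:math/0607238 — 5 statements merged into one kernel-verified Lean document; each statement's English description precedes it below -/
import Mathlib

section
/- For any n complex numbers z_1,...,z_n each with |z_k| ≥ 1, the maximum of |∑_{k=1}^n z_k^ν| over ν = 1,...,n is at least 1. -/
/-!
If every power sum `p_m = ∑ z_k ^ m`, `1 ≤ m ≤ n`, had modulus `< 1`, Newton's identities
`k e_k = ± ∑_{i<k} ± e_i p_{k-i}` (with `e_0 = 1`) would give `k |e_k| < ∑_{i<k} |e_i|`, hence
inductively `|e_k| < 1` for `1 ≤ k ≤ n`. But `|e_n| = ∏ |z_k| ≥ 1`.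
-/

open Finset MvPolynomial

namespace MvPolynomial

variable {σ : Type*} [Fintype σ]

theorem esymm_card (R : Type*) [CommSemiring R] : esymm σ R (Fintype.card σ) = ∏ i, X i := by
  simp [esymm, ← card_univ, powersetCard_self]

theorem mul_eval_esymm_eq_sum_range {R : Type*} [CommRing R] (z : σ → R) (k : ℕ) :
    k * eval z (esymm σ R k) = (-1) ^ (k + 1) *
      ∑ i ∈ range k, (-1) ^ i * eval z (esymm σ R i) * ∑ j, z j ^ (k - i) := by
  have h := congrArg (eval z) (mul_esymm_eq_sum σ R k)
  rw [sum_filter, Nat.sum_antidiagonal_eq_sum_range_succ_mk, sum_range_succ, if_neg (lt_irrefl k),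
    add_zero, sum_congr rfl fun i hi => if_pos (mem_range.1 hi)] at h
  simpa [psum] using h

theorem mul_norm_eval_esymm_lt_sum {𝕜 : Type*} [RCLike 𝕜] (z : σ → 𝕜) {k : ℕ} (hk : 1 ≤ k)
    (hp : ∀ m ∈ Icc 1 k, ‖∑ j, z j ^ m‖ < 1) :
    k * ‖eval z (esymm σ 𝕜 k)‖ < ∑ i ∈ range k, ‖eval z (esymm σ 𝕜 i)‖ := by
  have hpsum : ∀ i ∈ range k, ‖∑ j, z j ^ (k - i)‖ < 1 := fun i hi =>
    hp _ (mem_Icc.2 ⟨by grind, by omega⟩)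
  calc (k : ℝ) * ‖eval z (esymm σ 𝕜 k)‖
      = ‖∑ i ∈ range k, (-1) ^ i * eval z (esymm σ 𝕜 i) * ∑ j, z j ^ (k - i)‖ := by
        rw [← RCLike.norm_natCast (K := 𝕜), ← norm_mul, mul_eval_esymm_eq_sum_range]
        simp
    _ ≤ ∑ i ∈ range k, ‖eval z (esymm σ 𝕜 i)‖ * ‖∑ j, z j ^ (k - i)‖ := by
        refine (norm_sum_le _ _).trans_eq (sum_congr rfl fun i _ => ?_)
        simp
    _ < ∑ i ∈ range k, ‖eval z (esymm σ 𝕜 i)‖ := by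
        refine sum_lt_sum (fun i hi => mul_le_of_le_one_right (norm_nonneg _) (hpsum i hi).le)
          ⟨0, mem_range.2 hk, ?_⟩
        simpa [esymm_zero] using hpsum 0 (mem_range.2 hk)

end MvPolynomial

theorem lt_one_of_mul_lt_sum_range {a : ℕ → ℝ} {n : ℕ} (h0 : a 0 ≤ 1)
    (h : ∀ k ∈ Icc 1 n, k * a k < ∑ i ∈ range k, a i) : ∀ k ∈ Icc 1 n, a k < 1 := by
  intro k
  induction k using Nat.strong_induction_on with
  | _ k ih =>
    intro hk
    have hsum : ∑ i ∈ range k, a i ≤ k := by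
      refine (sum_le_card_nsmul _ _ 1 fun i hi => ?_).trans_eq (by simp)
      rcases Nat.eq_zero_or_pos i with rfl | hi0
      · exact h0
      · exact (ih i (mem_range.1 hi) (mem_Icc.2 ⟨hi0, by grind⟩)).le
    have hk0 : (0 : ℝ) < k := by exact_mod_cast (mem_Icc.1 hk).1
    nlinarith [h k hk]

theorem turan_first_main (n : ℕ) (hn : 1 ≤ n) (z : Fin n → ℂ)
    (hz : ∀ k, 1 ≤ ‖z k‖) :
    ∃ ν ∈ Finset.Icc 1 n, 1 ≤ ‖∑ k, z k ^ ν‖ := by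
  by_contra! hsmall
  have hesymm_lt : ‖eval z (esymm (Fin n) ℂ n)‖ < 1 :=
    lt_one_of_mul_lt_sum_range (a := fun k => ‖eval z (esymm (Fin n) ℂ k)‖)
      (by simp [esymm_zero])
      (fun k hk => mul_norm_eval_esymm_lt_sum z (mem_Icc.1 hk).1
        fun m hm => hsmall m (Icc_subset_Icc_right (mem_Icc.1 hk).2 hm))
      n (mem_Icc.2 ⟨hn, le_rfl⟩)
  have hprod : eval z (esymm (Fin n) ℂ n) = ∏ i, z i := by
    simpa using congrArg (eval z) (esymm_card (σ := Fin n) ℂ)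
  rw [hprod, norm_prod] at hesymm_lt
  exact hesymm_lt.not_ge (one_le_prod fun i _ => hz i)
end

section
/- Let z_1,...,z_n be complex numbers with |z_k| ≥ 1 for all k, and let 1 ≤ m ≤ n be an integer. Then max over ν = 1,...,2nm − m(m+1) + 1 of |∑_{k=1}^n z_k^ν| is at least √m. -/
/-!
If `‖s_ν‖ ^ 2 < m` for `1 ≤ ν ≤ M = 2nm - m(m+1) + 1`, fix a set `T` of `m` indices and expand
`‖s_ν‖ ^ 2 = ∑_{j,k} (z_j * conj z_k) ^ ν`. The pairs in `Tᶜ × Tᶜ` contribute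
`‖∑_{k ∉ T} z_k ^ ν‖ ^ 2 ≥ 0` and the diagonal of `T` contributes `∑_{k ∈ T} ‖z_k‖ ^ (2ν) ≥ m`,
so the remaining `M - 1` numbers `z_j * conj z_k` (`j ≠ k`, `j ∈ T` or `k ∈ T`) have
negative real power sums of every order `1, …, M` (`x < 0` in `ComplexOrder`).

Cassels' lemma excludes this: if the first `Q` power sums `p_ν` of `Q` numbers are negative,
Newton's identities `k e_k = -∑_{i<k} e_i p_{k-i}` for the signed elementary symmetric
functions `e_k` force `e_k > 0` for `k ≤ Q`, and at `k = Q + 1`, where `e_{Q+1} = 0`,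
they give `p_{Q+1} = -∑_{i<Q} e_{i+1} p_{Q-i} ≥ 0`.
-/

open Finset MvPolynomial ComplexConjugate
open scoped ComplexOrder

section Newton

variable {σ R : Type*} [Fintype σ] [CommRing R]

-- The coefficient of `X ^ k` in `∏ i, (1 - w i * X)`.
noncomputable def signedEsymm (w : σ → R) (k : ℕ) : R := (-1) ^ k * eval w (esymm σ R k)

@[simp] theorem signedEsymm_zero (w : σ → R) : signedEsymm w 0 = 1 := by
  simp [signedEsymm, esymm_zero]

theorem signedEsymm_eq_zero_of_card_lt (w : σ → R) {k : ℕ} (hk : Fintype.card σ < k) :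
    signedEsymm w k = 0 := by
  simp [signedEsymm, esymm, powersetCard_eq_empty.mpr hk]

theorem natCast_mul_signedEsymm (w : σ → R) (k : ℕ) :
    (k : R) * signedEsymm w k = -∑ i ∈ range k, signedEsymm w i * ∑ j, w j ^ (k - i) := by
  have h := congrArg (eval w) (mul_esymm_eq_sum σ R k)
  simp only [map_mul, map_natCast, map_pow, map_neg, map_one, map_sum, psum, eval_X] at h
  rw [sum_filter, Nat.sum_antidiagonal_eq_sum_range_succ_mk, sum_range_succ,
    if_neg (lt_irrefl k), add_zero, sum_congr rfl fun i hi => if_pos (mem_range.mp hi)] at h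
  have hsign : (-1 : R) ^ k * (-1) ^ (k + 1) = -1 := by
    rw [← pow_add]; exact Odd.neg_one_pow ⟨k, by ring⟩
  rw [signedEsymm, mul_left_comm, h, ← mul_assoc, hsign, neg_one_mul]
  rfl

variable [PartialOrder R] [IsStrictOrderedRing R]

theorem signedEsymm_pos [PosMulReflectLT R] {w : σ → R} {Q : ℕ}
    (hneg : ∀ ν ∈ Icc 1 Q, ∑ i, w i ^ ν < 0) {k : ℕ} (hk : k ≤ Q) : 0 < signedEsymm w k := by
  induction k using Nat.strong_induction_on with
  | _ k ih =>
    rcases Nat.eq_zero_or_pos k with rfl | hk0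
    · simp
    have hsum : ∑ i ∈ range k, signedEsymm w i * ∑ j, w j ^ (k - i) < 0 := by
      refine sum_neg (fun i hi => mul_neg_of_pos_of_neg ?_ ?_) (nonempty_range_iff.mpr hk0.ne')
      · exact ih i (mem_range.mp hi) (by grind)
      · exact hneg _ (by grind)
    refine pos_of_mul_pos_right (a := (k : R)) ?_ (Nat.cast_nonneg k)
    rw [natCast_mul_signedEsymm]
    exact neg_pos.mpr hsum

theorem not_forall_sum_pow_neg [PosMulReflectLT R] (w : σ → R) :
    ¬ ∀ ν ∈ Icc 1 (Fintype.card σ + 1), ∑ i, w i ^ ν < 0 := by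
  intro hneg
  set Q := Fintype.card σ
  have hnewton := natCast_mul_signedEsymm w (Q + 1)
  rw [signedEsymm_eq_zero_of_card_lt w (Nat.lt_succ_self Q), mul_zero, sum_range_succ',
    signedEsymm_zero, one_mul, Nat.sub_zero, eq_comm, neg_eq_zero] at hnewton
  have hrest : ∑ i ∈ range Q, signedEsymm w (i + 1) * ∑ j, w j ^ (Q + 1 - (i + 1)) ≤ 0 :=
    sum_nonpos fun i hi => (mul_neg_of_pos_of_neg
      (signedEsymm_pos (Q := Q) (fun ν hν => hneg ν (by grind)) (by grind)) (hneg _ (by grind))).le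
  have hlast := hneg (Q + 1) (by simp)
  rw [eq_neg_of_add_eq_zero_right hnewton] at hlast
  exact hlast.not_ge (neg_nonneg.mpr hrest)

theorem Finset.not_forall_sum_pow_neg {ι : Type*} [PosMulReflectLT R] (s : Finset ι) (w : ι → R) :
    ¬ ∀ ν ∈ Icc 1 (#s + 1), ∑ i ∈ s, w i ^ ν < 0 := by
  intro hneg
  refine _root_.not_forall_sum_pow_neg (fun i : s => w i) fun ν hν => ?_
  rw [sum_coe_sort s (fun i => w i ^ ν)]
  exact hneg ν (by simpa using hν)

end Newton

theorem Finset.sum_product_pow_mul_conj {ι R : Type*} [CommSemiring R] [StarRing R] (z : ι → R)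
    (s t : Finset ι) (ν : ℕ) :
    ∑ a ∈ s ×ˢ t, (z a.1 * conj (z a.2)) ^ ν = (∑ j ∈ s, z j ^ ν) * conj (∑ k ∈ t, z k ^ ν) := by
  simp [sum_product, sum_mul_sum, mul_pow]

variable {ι : Type*} [Fintype ι] [DecidableEq ι]

def offDiagMeeting (T : Finset ι) : Finset (ι × ι) := (univ \ Tᶜ ×ˢ Tᶜ) \ T.diag

theorem Finset.diag_subset_univ_sdiff_compl_product (T : Finset ι) : T.diag ⊆ univ \ Tᶜ ×ˢ Tᶜ := by
  intro a ha
  rw [mem_diag] at ha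
  simp [ha.1]

theorem card_offDiagMeeting (T : Finset ι) :
    #(offDiagMeeting T) + #Tᶜ * #Tᶜ + #T = Fintype.card ι * Fintype.card ι := by
  have h1 := card_sdiff_add_card_eq_card (diag_subset_univ_sdiff_compl_product T)
  have h2 := card_sdiff_add_card_eq_card (subset_univ (Tᶜ ×ˢ Tᶜ))
  rw [diag_card] at h1
  rw [card_product, card_univ, Fintype.card_prod] at h2
  rw [offDiagMeeting]; omega

theorem sum_offDiagMeeting_pow_mul_conj (z : ι → ℂ) (T : Finset ι) (ν : ℕ) :
    ∑ a ∈ offDiagMeeting T, (z a.1 * conj (z a.2)) ^ ν =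
      ((‖∑ k, z k ^ ν‖ ^ 2 - ‖∑ k ∈ Tᶜ, z k ^ ν‖ ^ 2 - ∑ k ∈ T, ‖z k‖ ^ (2 * ν) : ℝ) : ℂ) := by
  set f : ι × ι → ℂ := fun a => (z a.1 * conj (z a.2)) ^ ν
  have h1 := sum_sdiff (f := f) (diag_subset_univ_sdiff_compl_product T)
  have h2 := sum_sdiff (f := f) (subset_univ (Tᶜ ×ˢ Tᶜ))
  have hall : ∑ a, f a = ‖∑ k, z k ^ ν‖ ^ 2 := by
    rw [← univ_product_univ, sum_product_pow_mul_conj, Complex.mul_conj']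
  have hcompl : ∑ a ∈ Tᶜ ×ˢ Tᶜ, f a = ‖∑ k ∈ Tᶜ, z k ^ ν‖ ^ 2 := by
    rw [sum_product_pow_mul_conj, Complex.mul_conj']
  have hdiag : ∑ a ∈ T.diag, f a = ∑ k ∈ T, (‖z k‖ : ℂ) ^ (2 * ν) := by
    simp [f, diag, Complex.mul_conj', pow_mul]
  rw [offDiagMeeting]
  push_cast
  linear_combination h1 + h2 + hall - hcompl - hdiag

theorem cassels_type_lower_general (n m : ℕ) (hmn : m ≤ n)
    (z : Fin n → ℂ) (hz : ∀ k, 1 ≤ ‖z k‖) :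
    ∃ ν ∈ Finset.Icc 1 (2 * n * m - m * (m + 1) + 1),
      Real.sqrt m ≤ ‖∑ k, z k ^ ν‖ := by
  obtain ⟨T, -, hT⟩ := exists_subset_card_eq (s := (univ : Finset (Fin n))) (by simpa using hmn)
  have hcard : #(offDiagMeeting T) + 1 = 2 * n * m - m * (m + 1) + 1 := by
    have h := card_offDiagMeeting T
    rw [card_compl, hT, Fintype.card_fin] at h
    obtain ⟨d, rfl⟩ := Nat.exists_eq_add_of_le hmn
    rw [Nat.add_sub_cancel_left] at h
    have hP : #(offDiagMeeting T) + m * (m + 1) = 2 * (m + d) * m := by nlinarith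
    rw [Nat.eq_sub_of_add_eq hP]
  by_contra! hsmall
  refine (offDiagMeeting T).not_forall_sum_pow_neg (fun a => z a.1 * conj (z a.2)) fun ν hν => ?_
  rw [hcard] at hν
  have hfull : ‖∑ k, z k ^ ν‖ ^ 2 < m := (Real.lt_sqrt (norm_nonneg _)).mp (hsmall ν hν)
  have hdiag : (m : ℝ) ≤ ∑ k ∈ T, ‖z k‖ ^ (2 * ν) := by
    simpa [hT] using card_nsmul_le_sum T _ 1 fun k _ => one_le_pow₀ (hz k)
  rw [sum_offDiagMeeting_pow_mul_conj, ← Complex.ofReal_zero, Complex.real_lt_real]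
  linarith [sq_nonneg ‖∑ k ∈ Tᶜ, z k ^ ν‖]

theorem cassels_type_lower (n m : ℕ) (hm : 1 ≤ m) (hmn : m ≤ n)
    (z : Fin n → ℂ) (hz : ∀ k, 1 ≤ ‖z k‖) :
    ∃ ν ∈ Finset.Icc 1 (2 * n * m - m * (m + 1) + 1),
      Real.sqrt m ≤ ‖∑ k, z k ^ ν‖ :=
  cassels_type_lower_general n m hmn z hz
end

section
/- If n is a prime power, then there exist integers b_1,...,b_n such that the differences b_i − b_j mod (n²−1) for i ≠ j form exactly all residues mod n²−1 that are not divisible by n+1. -/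
/-!
Let `K ⊆ L` be finite fields with `|K| = q`, `|L| = q²`, and let `θ` generate the cyclic group
`Lˣ` of order `q² - 1`. Because `θ ∉ K`, the quotients `(θ + a) / (θ + b)` with `a ≠ b` in `K`
never lie in `K` and are pairwise distinct; as there are `q² - q = |Lˣ \ Kˣ|` of them, they are
exactly the elements of `Lˣ \ Kˣ`. Taking discrete logarithms `θ ^ bₐ = θ + a` turns quotients
into differences mod `q² - 1`, and `Kˣ`, the subgroup of index `q + 1` of `Lˣ`, becomes the set of
multiples of `q + 1`.
-/

section Extension

variable {K L : Type*} [Field K] [Field L] [Algebra K L]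

lemma add_algebraMap_ne_zero {θ : L} (hθ : θ ∉ Set.range (algebraMap K L)) (a : K) :
    θ + algebraMap K L a ≠ 0 := fun h ↦
  hθ ⟨-a, by rw [map_neg]; linear_combination -h⟩

lemma div_add_algebraMap_notMem_range {θ : L} (hθ : θ ∉ Set.range (algebraMap K L)) {a b : K}
    (hab : a ≠ b) :
    (θ + algebraMap K L a) / (θ + algebraMap K L b) ∉ Set.range (algebraMap K L) := by
  rintro ⟨c, hc⟩
  rw [eq_div_iff (add_algebraMap_ne_zero hθ b)] at hc
  have hc1 : 1 - c ≠ 0 := by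
    rintro hc1
    obtain rfl : c = 1 := by linear_combination -hc1
    exact hab ((algebraMap K L).injective (by simpa using hc)).symm
  refine hθ ⟨(c * b - a) / (1 - c), ?_⟩
  rw [map_div₀, div_eq_iff ((map_ne_zero _).mpr hc1)]
  simp only [map_sub, map_mul, map_one]
  linear_combination hc

lemma injOn_div_add_algebraMap {θ : L} (hθ : θ ∉ Set.range (algebraMap K L)) :
    Set.InjOn (fun p : K × K ↦ (θ + algebraMap K L p.1) / (θ + algebraMap K L p.2))
      {p | p.1 ≠ p.2} := by
  rintro ⟨a, b⟩ hab ⟨a', b'⟩ - h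
  change a ≠ b at hab
  simp only [div_eq_div_iff (add_algebraMap_ne_zero hθ b) (add_algebraMap_ne_zero hθ b')] at h
  have hlin : θ * algebraMap K L (a + b' - a' - b) = algebraMap K L (a' * b - a * b') := by
    simp only [map_sub, map_add, map_mul]
    linear_combination h
  have hs : a + b' - a' - b = 0 := by
    by_contra hs
    refine hθ ⟨(a' * b - a * b') / (a + b' - a' - b), ?_⟩
    rw [map_div₀, div_eq_iff ((map_ne_zero _).mpr hs), hlin]
  have hq : a' * b - a * b' = 0 := by
    rw [hs, map_zero, mul_zero] at hlin
    exact (map_eq_zero _).mp hlin.symm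
  -- with `d = a - a' = b - b'`, `hq` reads `d * (a - b) = 0`
  have hd : (a - a') * (a - b) = 0 := by linear_combination hq + a * hs
  obtain rfl : a = a' := by simpa [sub_eq_zero, hab] using hd
  exact Prod.ext rfl (by linear_combination -hs)

lemma card_range_unitsMap_algebraMap :
    Nat.card (Units.map (algebraMap K L).toMonoidHom).range = Nat.card K - 1 := by
  rw [← Nat.card_units, Nat.card_congr (MonoidHom.ofInjective
    (Units.map_injective (algebraMap K L).injective)).toEquiv.symm]

end Extension

lemma Units.mem_range_map_iff {K L : Type*} [DivisionRing K] [Ring L] [Nontrivial L]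
    (f : K →+* L) (v : Lˣ) :
    v ∈ (Units.map f.toMonoidHom).range ↔ (v : L) ∈ Set.range f := by
  refine ⟨fun ⟨u, hu⟩ ↦ ⟨u, by rw [← hu]; rfl⟩, fun ⟨c, hc⟩ ↦ ?_⟩
  have hc0 : c ≠ 0 := by rintro rfl; exact v.ne_zero (by rw [← hc, map_zero])
  exact ⟨Units.mk0 c hc0, Units.ext hc⟩

lemma Subgroup.pow_mem_iff_index_dvd {G : Type*} [CommGroup G] [Finite G] {g : G}
    (hg : orderOf g = Nat.card G) (H : Subgroup G) (w : ℕ) : g ^ w ∈ H ↔ H.index ∣ w := by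
  refine ⟨fun hw ↦ ?_, fun ⟨t, ht⟩ ↦ ht ▸ pow_mul g _ t ▸ pow_mem (H.pow_index_mem g) t⟩
  have h1 : (g ^ w) ^ Nat.card H = 1 := by
    have := pow_card_eq_one' (x := (⟨g ^ w, hw⟩ : H))
    rwa [Subtype.ext_iff, Subgroup.coe_pow] at this
  rw [← pow_mul, ← orderOf_dvd_iff_pow_eq_one, hg, ← H.card_mul_index, mul_comm w] at h1
  exact Nat.dvd_of_mul_dvd_mul_left Nat.card_pos h1

lemma ZMod.intCast_eq_iff_zpow_eq_pow_val {G : Type*} [Group G] {g : G} {m : ℕ} [NeZero m]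
    (hg : orderOf g = m) (a : ℤ) (r : ZMod m) : (a : ZMod m) = r ↔ g ^ a = g ^ r.val :=
  calc (a : ZMod m) = r ↔ (a : ZMod m) = ((r.val : ℤ) : ZMod m) := by
        rw [Int.cast_natCast, ZMod.natCast_zmod_val]
    _ ↔ g ^ a = g ^ (r.val : ℤ) := by
        rw [ZMod.intCast_eq_intCast_iff, zpow_eq_zpow_iff_modEq, hg]
    _ ↔ g ^ a = g ^ r.val := by rw [zpow_natCast]

lemma exists_intCast_sub_eq_of_bijOn_div {G ι : Type*} [CommGroup G] [Finite G] {g : G}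
    (hg : ∀ u, u ∈ Subgroup.zpowers g) {m : ℕ} (hm : Nat.card G = m) (H : Subgroup G)
    (x : ι → G) (hx : Set.BijOn (fun p : ι × ι ↦ x p.1 / x p.2) {p | p.1 ≠ p.2} (↑H)ᶜ) :
    ∃ b : ι → ℤ, ∀ r : ZMod m,
      (¬ H.index ∣ r.val →
        ∃! p : ι × ι, p.1 ≠ p.2 ∧ ((b p.1 - b p.2 : ℤ) : ZMod m) = r) ∧
      (H.index ∣ r.val →
        ¬ ∃ p : ι × ι, p.1 ≠ p.2 ∧ ((b p.1 - b p.2 : ℤ) : ZMod m) = r) := by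
  have hord : orderOf g = m := (orderOf_eq_card_of_forall_mem_zpowers hg).trans hm
  have : NeZero m := ⟨hm ▸ Nat.card_pos.ne'⟩
  choose b hb using fun i ↦ Subgroup.mem_zpowers_iff.mp (hg (x i))
  have hdiff (p : ι × ι) (r : ZMod m) :
      ((b p.1 - b p.2 : ℤ) : ZMod m) = r ↔ x p.1 / x p.2 = g ^ r.val := by
    rw [ZMod.intCast_eq_iff_zpow_eq_pow_val hord, zpow_sub, hb, hb, div_eq_mul_inv]
  refine ⟨b, fun r ↦ ?_⟩
  simp only [hdiff, ← H.pow_mem_iff_index_dvd (hord.trans hm.symm)]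
  refine ⟨fun hr ↦ ?_, fun hr ⟨p, hp, he⟩ ↦ hx.mapsTo hp (he ▸ hr)⟩
  obtain ⟨p, hp, he⟩ := hx.surjOn hr
  exact ⟨p, ⟨hp, he⟩, fun p' ⟨hp', he'⟩ ↦ hx.injOn hp' hp (he'.trans he.symm)⟩

section FiniteField

variable {K L : Type*} [Field K] [Finite K] [Field L] [Algebra K L]

lemma index_range_unitsMap_algebraMap (hL : Nat.card L = Nat.card K ^ 2) :
    (Units.map (algebraMap K L).toMonoidHom).range.index = Nat.card K + 1 := by
  have hK : 1 < Nat.card K := Finite.one_lt_card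
  have h := (Units.map (algebraMap K L).toMonoidHom).range.card_mul_index
  rw [card_range_unitsMap_algebraMap, Nat.card_units, hL] at h
  refine Nat.eq_of_mul_eq_mul_left (show 0 < Nat.card K - 1 by omega) (h.trans ?_)
  zify [hK.le, Nat.one_le_pow 2 _ (by omega : 0 < Nat.card K)]
  ring

variable [Finite L]

theorem bijOn_div_add_algebraMap (hL : Nat.card L = Nat.card K ^ 2) {θ : L}
    (hθ : θ ∉ Set.range (algebraMap K L)) {ι : Type*} (a : ι ≃ K) (x : ι → Lˣ)
    (hx : ∀ i, (x i : L) = θ + algebraMap K L (a i)) :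
    Set.BijOn (fun p : ι × ι ↦ x p.1 / x p.2) {p | p.1 ≠ p.2}
      (↑(Units.map (algebraMap K L).toMonoidHom).range)ᶜ := by
  set H := (Units.map (algebraMap K L).toMonoidHom).range
  have hmaps : Set.MapsTo (fun p : ι × ι ↦ x p.1 / x p.2) {p | p.1 ≠ p.2} (↑H)ᶜ := by
    intro p hp
    rw [Set.mem_compl_iff, SetLike.mem_coe, Units.mem_range_map_iff, Units.val_div_eq_div_val,
      hx, hx]
    exact div_add_algebraMap_notMem_range hθ (a.injective.ne hp)
  have hinj : Set.InjOn (fun p : ι × ι ↦ x p.1 / x p.2) {p | p.1 ≠ p.2} := by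
    intro p hp p' hp' h
    have h' := congrArg Units.val h
    simp only [Units.val_div_eq_div_val, hx] at h'
    have := injOn_div_add_algebraMap hθ (show (a p.1, a p.2) ∈ {q | q.1 ≠ q.2} from
      a.injective.ne hp) (show (a p'.1, a p'.2) ∈ {q | q.1 ≠ q.2} from a.injective.ne hp') h'
    exact Prod.ext (a.injective (congrArg Prod.fst this)) (a.injective (congrArg Prod.snd this))
  have hq : 1 ≤ Nat.card K := Finite.one_lt_card.le
  have : Finite ι := .of_equiv K a.symm
  have hcard : ({p | p.1 ≠ p.2} : Set (ι × ι)).ncard = (↑H : Set Lˣ)ᶜ.ncard := by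
    change (Set.diagonal ι)ᶜ.ncard = _
    rw [Set.ncard_compl, Set.ncard_compl, ← Set.range_diag,
      Set.ncard_range_of_injective Function.diag_injective, ← Nat.card_coe_set_eq,
      SetLike.coe_sort_coe, card_range_unitsMap_algebraMap, Nat.card_prod, Nat.card_units, hL,
      Nat.card_congr a]
    zify [hq, Nat.one_le_pow 2 _ hq, Nat.le_mul_self (Nat.card K),
      Nat.sub_le (Nat.card K ^ 2) 1, Nat.sub_le_sub_right (Nat.le_self_pow two_ne_zero _) 1]
    ring
  have himage := Set.eq_of_subset_of_ncard_le hmaps.image_subset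
    (by rw [hinj.ncard_image, hcard])
  exact ⟨hmaps, hinj, himage.symm.subset⟩

theorem exists_bose_of_card_eq_sq (hL : Nat.card L = Nat.card K ^ 2) :
    ∃ b : Fin (Nat.card K) → ℤ, ∀ r : ZMod (Nat.card K ^ 2 - 1),
      (¬ (Nat.card K + 1) ∣ r.val →
        ∃! p : Fin (Nat.card K) × Fin (Nat.card K), p.1 ≠ p.2 ∧
          ((b p.1 - b p.2 : ℤ) : ZMod (Nat.card K ^ 2 - 1)) = r) ∧
      ((Nat.card K + 1) ∣ r.val →
        ¬ ∃ p : Fin (Nat.card K) × Fin (Nat.card K), p.1 ≠ p.2 ∧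
          ((b p.1 - b p.2 : ℤ) : ZMod (Nat.card K ^ 2 - 1)) = r) := by
  obtain ⟨g, hg⟩ := IsCyclic.exists_generator (α := Lˣ)
  set H := (Units.map (algebraMap K L).toMonoidHom).range
  have hindex : H.index = Nat.card K + 1 := index_range_unitsMap_algebraMap hL
  have hgK : (g : L) ∉ Set.range (algebraMap K L) := by
    rw [← Units.mem_range_map_iff, ← pow_one g,
      H.pow_mem_iff_index_dvd (orderOf_eq_card_of_forall_mem_zpowers hg), hindex]
    exact Nat.not_dvd_of_pos_of_lt one_pos (by simp)
  let a := (Finite.equivFin K).symm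
  let x i := Units.mk0 _ (add_algebraMap_ne_zero hgK (a i))
  exact hindex ▸ exists_intCast_sub_eq_of_bijOn_div hg (by rw [Nat.card_units, hL]) H x
    (bijOn_div_add_algebraMap hL hgK a x fun _ ↦ rfl)

end FiniteField

theorem bose_theorem (n : ℕ) (h : IsPrimePow n) :
    ∃ b : Fin n → ℤ, ∀ r : ZMod (n ^ 2 - 1),
      (¬ (n + 1) ∣ r.val →
        ∃! p : Fin n × Fin n, p.1 ≠ p.2 ∧
          ((b p.1 - b p.2 : ℤ) : ZMod (n ^ 2 - 1)) = r) ∧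
      ((n + 1) ∣ r.val →
        ¬ ∃ p : Fin n × Fin n, p.1 ≠ p.2 ∧
          ((b p.1 - b p.2 : ℤ) : ZMod (n ^ 2 - 1)) = r) := by
  obtain ⟨p, k, hp, hk, rfl⟩ := h
  have : Fact p.Prime := ⟨hp.nat_prime⟩
  have hK : Nat.card (GaloisField p k) = p ^ k := GaloisField.card p k hk.ne'
  have := exists_bose_of_card_eq_sq (K := GaloisField p k)
    (L := FiniteField.Extension (GaloisField p k) p 2) (FiniteField.natCard_extension _ _ _)
  rwa [hK] at this
end

section
/- Suppose b_1,...,b_n are integers such that the differences b_i − b_j mod (n²−1) for i ≠ j form exactly all residues mod n²−1 not divisible by n+1. Define z_k = e^{2πi b_k/(n²−1)}. Then for every ν with 1 ≤ ν ≤ n²−2, |∑_{k=1}^n z_k^ν| equals √n if (n−1) does not divide ν, and equals 1 if (n−1) divides ν. -/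
/-!
Write `ψ` for the additive character `r ↦ e(νr/(n²−1))` of `ZMod (n²−1)`. The power sum is
`∑ ψ(b_k)`, so its squared norm is `n + ∑_{i ≠ j} ψ(b_i − b_j)`. By the difference-set hypothesis
the off-diagonal terms run exactly once over the residues not divisible by `n + 1`. The sum over
all residues vanishes because `ν ≢ 0`, while the multiples `(n+1)s` contribute the complete sum of
`e(νs/(n−1))` over `ZMod (n−1)`, which is `n − 1` or `0` according as `(n−1) ∣ ν`.
-/

open Finset

theorem Finset.sum_offDiag_sub_eq_sum_filter {ι G M : Type*} [Fintype ι] [DecidableEq ι]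
    [AddGroup G] [Fintype G] [AddCommMonoid M] (c : ι → G) (P : G → Prop) [DecidablePred P]
    (hP : ∀ i j, i ≠ j → P (c i - c j))
    (hunique : ∀ r, P r → ∃! p : ι × ι, p.1 ≠ p.2 ∧ c p.1 - c p.2 = r) (g : G → M) :
    ∑ p ∈ univ.offDiag, g (c p.1 - c p.2) = ∑ r with P r, g r := by
  refine sum_bij (fun p _ => c p.1 - c p.2) ?_ ?_ ?_ (fun _ _ => rfl)
  · intro p hp
    exact mem_filter.2 ⟨mem_univ _, hP _ _ (mem_offDiag.1 hp).2.2⟩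
  · intro p hp q hq hpq
    exact (hunique _ (hP _ _ (mem_offDiag.1 hp).2.2)).unique
      ⟨(mem_offDiag.1 hp).2.2, rfl⟩ ⟨(mem_offDiag.1 hq).2.2, hpq.symm⟩
  · intro r hr
    obtain ⟨p, ⟨hne, rfl⟩, -⟩ := hunique r (mem_filter.1 hr).2
    exact ⟨p, mem_offDiag.2 ⟨mem_univ _, mem_univ _, hne⟩, rfl⟩

theorem AddChar.sq_norm_sum_eq_card_add_sum_offDiag {ι G : Type*} [Fintype ι] [DecidableEq ι]
    [AddCommGroup G] [Finite G] (ψ : AddChar G ℂ) (c : ι → G) :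
    (‖∑ i, ψ (c i)‖ ^ 2 : ℂ) = Fintype.card ι + ∑ p ∈ univ.offDiag, ψ (c p.1 - c p.2) := by
  have hprod (x y : G) : ψ x * starRingEnd ℂ (ψ y) = ψ (x - y) := by
    rw [sub_eq_add_neg, ψ.map_add_eq_mul, ψ.map_neg_eq_conj]
  simp_rw [← Complex.mul_conj', map_sum, sum_mul_sum, ← sum_product', hprod,
    ← diag_union_offDiag, sum_union (disjoint_diag_offDiag _), sum_diag, sub_self,
    AddChar.map_zero_eq_one, sum_const, card_univ, nsmul_one]

namespace ZMod

variable {N : ℕ} [NeZero N]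

theorem sum_stdAddChar_natCast_mul (ν : ℕ) :
    ∑ x : ZMod N, stdAddChar ((ν : ZMod N) * x) = if N ∣ ν then (N : ℂ) else 0 := by
  simp_rw [mul_comm (ν : ZMod N), AddChar.sum_mulShift _ (isPrimitive_stdAddChar N),
    natCast_eq_zero_iff, card, Nat.cast_ite, Nat.cast_zero]

theorem stdAddChar_natCast_mul_of_eq_mul {d e : ℕ} [NeZero e] (hN : N = d * e) (m : ℕ) :
    stdAddChar ((d * m : ℕ) : ZMod N) = stdAddChar (m : ZMod e) := by
  have hd : (d : ℂ) ≠ 0 := by exact_mod_cast left_ne_zero_of_mul (hN ▸ NeZero.ne N)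
  rw [← Int.cast_natCast, stdAddChar_coe, ← Int.cast_natCast (R := ZMod e), stdAddChar_coe, hN]
  push_cast
  congr 1
  field_simp

theorem sum_filter_dvd_val {M : Type*} [AddCommMonoid M] {d e : ℕ} [NeZero e]
    (hN : N = d * e) (f : ZMod N → M) :
    ∑ r with d ∣ r.val, f r = ∑ s : ZMod e, f ((d * s.val : ℕ)) := by
  have hd : 0 < d := Nat.pos_of_ne_zero (left_ne_zero_of_mul (hN ▸ NeZero.ne N))
  have hlt (s : ZMod e) : d * s.val < N := hN ▸ Nat.mul_lt_mul_of_pos_left s.val_lt hd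
  symm
  refine sum_nbij' (fun s => ((d * s.val : ℕ) : ZMod N)) (fun r => ((r.val / d : ℕ) : ZMod e))
    ?_ ?_ ?_ ?_ (fun _ _ => rfl)
  · intro s _
    rw [mem_filter, val_cast_of_lt (hlt s)]
    exact ⟨mem_univ _, dvd_mul_right d _⟩
  · intro r _
    exact mem_univ _
  · intro s _
    rw [val_cast_of_lt (hlt s), Nat.mul_div_cancel_left _ hd, natCast_zmod_val]
  · intro r hr
    have hquot : r.val / d < e := Nat.div_lt_of_lt_mul (hN ▸ r.val_lt)
    rw [val_cast_of_lt hquot, Nat.mul_div_cancel' (mem_filter.1 hr).2, natCast_zmod_val]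

theorem sum_filter_dvd_val_stdAddChar_natCast_mul {d e : ℕ} [NeZero e] (hN : N = d * e)
    (ν : ℕ) :
    ∑ r : ZMod N with d ∣ r.val, stdAddChar ((ν : ZMod N) * r) =
      if e ∣ ν then (e : ℂ) else 0 := by
  rw [sum_filter_dvd_val hN, ← sum_stdAddChar_natCast_mul ν]
  refine sum_congr rfl fun s _ => ?_
  rw [← Nat.cast_mul, show ν * (d * s.val) = d * (ν * s.val) by ring,
    stdAddChar_natCast_mul_of_eq_mul hN, Nat.cast_mul, natCast_zmod_val]

end ZMod

theorem bose_power_sums (n : ℕ) (b : Fin n → ℤ)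
    (hdiff : ∀ r : ZMod (n ^ 2 - 1),
      (¬ (n + 1) ∣ r.val →
        ∃! p : Fin n × Fin n, p.1 ≠ p.2 ∧
          ((b p.1 - b p.2 : ℤ) : ZMod (n ^ 2 - 1)) = r) ∧
      ((n + 1) ∣ r.val →
        ¬ ∃ p : Fin n × Fin n, p.1 ≠ p.2 ∧
          ((b p.1 - b p.2 : ℤ) : ZMod (n ^ 2 - 1)) = r))
    (z : Fin n → ℂ)
    (hz : ∀ k, z k = Complex.exp (2 * Real.pi * Complex.I * (b k) / (n ^ 2 - 1))) :
    ∀ ν : ℕ, 1 ≤ ν → ν ≤ n ^ 2 - 2 →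
      ‖∑ k, z k ^ ν‖ = if (n - 1) ∣ ν then 1 else Real.sqrt n := by
  intro ν hν1 hν2
  have hn : 2 ≤ n := by
    by_contra! h
    interval_cases n <;> omega
  have hN : n ^ 2 - 1 = (n + 1) * (n - 1) := by simpa using Nat.sq_sub_sq n 1
  have : NeZero (n - 1) := ⟨by omega⟩
  have : NeZero (n ^ 2 - 1) := ⟨by rw [hN]; exact Nat.mul_ne_zero (by omega) (by omega)⟩
  set ψ := (ZMod.stdAddChar (N := n ^ 2 - 1)).mulShift ν
  have hzψ (k : Fin n) : z k ^ ν = ψ (b k) := by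
    have hcast : ((n ^ 2 - 1 : ℕ) : ℂ) = (n : ℂ) ^ 2 - 1 := by
      rw [Nat.cast_sub (Nat.one_le_pow 2 n (by omega)), Nat.cast_pow, Nat.cast_one]
    rw [hz k, ← hcast, ← ZMod.stdAddChar_coe, ← AddChar.map_nsmul_eq_pow, nsmul_eq_mul,
      AddChar.mulShift_apply]
  simp only [Int.cast_sub] at hdiff
  have hsq : (‖∑ k, z k ^ ν‖ ^ 2 : ℂ) = if (n - 1) ∣ ν then 1 else (n : ℂ) := by
    have hnot : ¬ (n ^ 2 - 1) ∣ ν := fun h => by have := Nat.le_of_dvd hν1 h; omega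
    rw [Fintype.sum_congr _ _ hzψ, ψ.sq_norm_sum_eq_card_add_sum_offDiag,
      sum_offDiag_sub_eq_sum_filter (fun k => (b k : ZMod (n ^ 2 - 1)))
        (fun r => ¬ (n + 1) ∣ r.val) (fun i j hij hdvd => (hdiff _).2 hdvd ⟨(i, j), hij, rfl⟩)
        (fun r => (hdiff r).1),
      ← sub_eq_of_eq_add' (sum_filter_add_sum_filter_not univ (fun r => (n + 1) ∣ r.val) ψ).symm]
    simp only [ψ, AddChar.mulShift_apply, ZMod.sum_stdAddChar_natCast_mul, if_neg hnot,
      ZMod.sum_filter_dvd_val_stdAddChar_natCast_mul hN, Fintype.card_fin]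
    split_ifs <;> push_cast [Nat.cast_sub (by omega : 1 ≤ n)] <;> ring
  have hsq' : ‖∑ k, z k ^ ν‖ ^ 2 = if (n - 1) ∣ ν then 1 else (n : ℝ) := by
    split_ifs at hsq ⊢ <;> exact_mod_cast hsq
  rw [← Real.sqrt_sq (norm_nonneg _), hsq', apply_ite Real.sqrt, Real.sqrt_one]
end

section
/- Let z_1,...,z_n be unimodular complex numbers and suppose that for every ν with 1 ≤ ν ≤ n²−n one has |∑_{k=1}^n z_k^ν|² ≤ n−1. Then for each such ν with n²−n+1 ∤ ν, letting s_ν = ∑_{k=1}^n z_k^ν, if the z_k come from a perfect difference set construction z_k = e^{2πi a_k/(n²−n+1)} then |s_ν|² = n−1 exactly, i.e. the maximum √(n−1) is attained at every ν in the range. -/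
/-!
If `ψ` is a nontrivial additive character of a finite abelian group `G`, then
`|∑ ψ(aᵢ)|² = ∑_{i,j} ψ(aᵢ - aⱼ)`. The diagonal contributes `n`; when every nonzero element of
`G` is exactly one difference `aᵢ - aⱼ`, the off-diagonal terms add up to `∑_{r ≠ 0} ψ(r) = -1`.
The power sums `∑ z_k^ν` are such character sums on `ℤ/(n² - n + 1)`, with
`ψ(r) = e^{2πiνr/(n²-n+1)}`, which is nontrivial exactly when `n² - n + 1 ∤ ν`.
-/

open Finset Complex ComplexConjugate

def IsPerfectDifferenceSet {G ι : Type*} [AddGroup G] (a : ι → G) : Prop :=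
  ∀ r : G, r ≠ 0 → ∃! p : ι × ι, p.1 ≠ p.2 ∧ a p.1 - a p.2 = r

namespace IsPerfectDifferenceSet

variable {G ι : Type*} [AddCommGroup G] [Fintype G] [DecidableEq G] [Fintype ι] {a : ι → G}

/-- `G ∖ {0}` has as many elements as there are ordered pairs of distinct indices, and each of
its elements is a difference, so no pair is left over to have difference `0`. -/
lemma sub_ne_zero (ha : IsPerfectDifferenceSet a)
    (hcard : Fintype.card G = Fintype.card ι * (Fintype.card ι - 1) + 1) {i j : ι}
    (hij : i ≠ j) : a i - a j ≠ 0 := by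
  set S := (univ.offDiag : Finset (ι × ι)).filter fun p => a p.1 - a p.2 ≠ 0
  have hsurj : Set.SurjOn (fun p : ι × ι => a p.1 - a p.2) S ↑(univ.erase (0 : G)) := by
    intro r hr
    obtain ⟨p, ⟨hp, rfl⟩, -⟩ := ha r (ne_of_mem_erase hr)
    exact ⟨p, by simpa [S, hp] using ne_of_mem_erase hr, rfl⟩
  have hS : S = univ.offDiag := by
    refine eq_of_subset_of_card_le (filter_subset _ _) ?_
    calc #(univ.offDiag : Finset (ι × ι))
        = #(univ.erase (0 : G)) := by
          rw [offDiag_card, card_erase_of_mem (mem_univ _), card_univ, card_univ, hcard,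
            Nat.mul_sub_one, Nat.add_sub_cancel]
      _ ≤ #S := card_le_card_of_surjOn _ hsurj
  have hmem : (i, j) ∈ S := hS ▸ by simpa using hij
  exact (mem_filter.mp hmem).2

lemma sum_offDiag [DecidableEq ι] {M : Type*} [AddCommMonoid M] (ha : IsPerfectDifferenceSet a)
    (hcard : Fintype.card G = Fintype.card ι * (Fintype.card ι - 1) + 1) (f : G → M) :
    ∑ p ∈ univ.offDiag, f (a p.1 - a p.2) = ∑ r ∈ univ.erase 0, f r := by
  refine sum_nbij (fun p => a p.1 - a p.2) ?_ ?_ ?_ fun _ _ => rfl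
  · intro p hp
    exact mem_erase.mpr ⟨ha.sub_ne_zero hcard (mem_offDiag.mp hp).2.2, mem_univ _⟩
  · intro p hp q hq hpq
    have hp' := (mem_offDiag.mp hp).2.2
    exact (ha _ (ha.sub_ne_zero hcard hp')).unique ⟨hp', rfl⟩ ⟨(mem_offDiag.mp hq).2.2, hpq.symm⟩
  · intro r hr
    obtain ⟨p, ⟨hp, rfl⟩, -⟩ := ha r (ne_of_mem_erase hr)
    exact ⟨p, by simpa using hp, rfl⟩

lemma norm_sum_addChar_sq [DecidableEq ι] (ha : IsPerfectDifferenceSet a)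
    (hcard : Fintype.card G = Fintype.card ι * (Fintype.card ι - 1) + 1)
    {ψ : AddChar G ℂ} (hψ : ψ ≠ 1) :
    ‖∑ i, ψ (a i)‖ ^ 2 = Fintype.card ι - 1 := by
  have hnonzero : ∑ r ∈ univ.erase 0, ψ r = -1 := by
    have := sum_erase_add univ ψ (mem_univ 0)
    rw [AddChar.sum_eq_zero_of_ne_one hψ, AddChar.map_zero_eq_one] at this
    linear_combination this
  have hdiag : ∑ p ∈ (univ : Finset ι).diag, ψ (a p.1 - a p.2) = Fintype.card ι := by
    rw [sum_congr rfl fun p hp => by rw [(mem_diag.mp hp).2, sub_self]]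
    simp
  have key : ((‖∑ i, ψ (a i)‖ ^ 2 : ℝ) : ℂ) = Fintype.card ι - 1 :=
    calc ((‖∑ i, ψ (a i)‖ ^ 2 : ℝ) : ℂ)
        = (∑ i, ψ (a i)) * conj (∑ i, ψ (a i)) := by push_cast; exact (mul_conj' _).symm
      _ = ∑ p ∈ univ ×ˢ univ, ψ (a p.1 - a p.2) := by
          simp only [map_sum, sum_mul_sum, sum_product, sub_eq_add_neg, AddChar.map_add_eq_mul,
            AddChar.map_neg_eq_conj]
      _ = ∑ p ∈ univ.diag, ψ (a p.1 - a p.2) + ∑ p ∈ univ.offDiag, ψ (a p.1 - a p.2) := by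
          rw [← diag_union_offDiag, sum_union (disjoint_diag_offDiag _)]
      _ = Fintype.card ι - 1 := by
          rw [hdiag, ha.sum_offDiag hcard, hnonzero, sub_eq_add_neg]
  exact_mod_cast key

lemma norm_sum_exp_pow_sq {m : ℕ} [NeZero m] {a : ι → ℤ}
    (ha : IsPerfectDifferenceSet fun i => (a i : ZMod m))
    (hcard : m = Fintype.card ι * (Fintype.card ι - 1) + 1) {ν : ℕ} (hν : ¬ m ∣ ν) :
    ‖∑ i, exp (2 * Real.pi * I * a i / m) ^ ν‖ ^ 2 = Fintype.card ι - 1 := by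
  classical
  have hψ : ZMod.stdAddChar.mulShift (ν : ZMod m) ≠ 1 :=
    ZMod.isPrimitive_stdAddChar m (by rwa [Ne, ZMod.natCast_eq_zero_iff])
  have hterm : ∀ i, exp (2 * Real.pi * I * a i / m) ^ ν =
      ZMod.stdAddChar.mulShift (ν : ZMod m) (a i) := by
    intro i
    rw [AddChar.mulShift_spec', ZMod.stdAddChar_coe]
  simp_rw [hterm]
  exact ha.norm_sum_addChar_sq (by rwa [ZMod.card]) hψ

end IsPerfectDifferenceSet

theorem fabrykowski_equality_general (n : ℕ) (z : Fin n → ℂ) :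
    ∀ ν ∈ Finset.Icc 1 (n ^ 2 - n), ¬ (n ^ 2 - n + 1) ∣ ν →
      (∃ a : Fin n → ℤ,
        (∀ r : ZMod (n ^ 2 - n + 1), r ≠ 0 →
          ∃! p : Fin n × Fin n, p.1 ≠ p.2 ∧
            ((a p.1 - a p.2 : ℤ) : ZMod (n ^ 2 - n + 1)) = r) ∧
        ∀ k, z k = Complex.exp (2 * Real.pi * Complex.I * (a k) / (n ^ 2 - n + 1))) →
      ‖∑ k, z k ^ ν‖ ^ 2 = (n : ℝ) - 1 := by
  rintro ν - hν ⟨a, hperfect, hz⟩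
  have hm : ((n ^ 2 - n + 1 : ℕ) : ℂ) = (n : ℂ) ^ 2 - n + 1 := by
    push_cast [Nat.le_self_pow two_ne_zero n]
    ring
  obtain rfl : z = fun k => exp (2 * Real.pi * I * a k / (n ^ 2 - n + 1 : ℕ)) := by
    funext k
    rw [hz k, hm]
  have hcard : n ^ 2 - n + 1 = Fintype.card (Fin n) * (Fintype.card (Fin n) - 1) + 1 := by
    rw [Fintype.card_fin, Nat.mul_sub_one, sq]
  push_cast at hperfect
  simpa using IsPerfectDifferenceSet.norm_sum_exp_pow_sq hperfect hcard hν

theorem fabrykowski_equality (n : ℕ) (z : Fin n → ℂ)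
    (hz : ∀ k, ‖z k‖ = 1)
    (hsmall : ∀ ν ∈ Finset.Icc 1 (n ^ 2 - n), ‖∑ k, z k ^ ν‖ ^ 2 ≤ (n : ℝ) - 1) :
    ∀ ν ∈ Finset.Icc 1 (n ^ 2 - n), ¬ (n ^ 2 - n + 1) ∣ ν →
      (∃ a : Fin n → ℤ,
        (∀ r : ZMod (n ^ 2 - n + 1), r ≠ 0 →
          ∃! p : Fin n × Fin n, p.1 ≠ p.2 ∧
            ((a p.1 - a p.2 : ℤ) : ZMod (n ^ 2 - n + 1)) = r) ∧
        ∀ k, z k = Complex.exp (2 * Real.pi * Complex.I * (a k) / (n ^ 2 - n + 1))) →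
      ‖∑ k, z k ^ ν‖ ^ 2 = (n : ℝ) - 1 :=
  fabrykowski_equality_general n z
end
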